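/- arXiv:1403.0734 — 3 statements merged into one kernel-verified Lean document; each statement's English description precedes it below -/
import Mathlib

section
/- In a finite simple graph with m edges, for every vertex u the high-neighborhood Γ⁺(u) has size at most 2√m. -/
/-- The degree-based total order: `x ≺ y` iff `d(x) < d(y)`, or `d(x) = d(y)` and `x < y`. -/
def degPrec {V : Type*} [Fintype V] [LinearOrder V] (G : SimpleGraph V)
    [DecidableRel G.Adj] (x y : V) : Prop :=
  G.degree x < G.degree y ∨ (G.degree x = G.degree y ∧ x < y)

instance {V : Type*} [Fintype V] [LinearOrder V] (G : SimpleGraph V)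
    [DecidableRel G.Adj] (x y : V) : Decidable (degPrec G x y) := by
  unfold degPrec; infer_instance

/-- The high neighborhood `Γ⁺(u)`: neighbors of `u` that are larger under `≺`. -/
def gammaPlus {V : Type*} [Fintype V] [LinearOrder V] (G : SimpleGraph V)
    [DecidableRel G.Adj] (u : V) : Finset V :=
  (G.neighborFinset u).filter (fun x => degPrec G u x)

/-- In a finite simple graph with `m` edges, for every vertex `u` the high
neighborhood `Γ⁺(u)` has size at most `2√m`. -/
theorem stmt1 {V : Type*} [Fintype V] [LinearOrder V] (G : SimpleGraph V)
    [DecidableRel G.Adj] (u : V) :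
    ((gammaPlus G u).card : ℝ) ≤ 2 * Real.sqrt (G.edgeFinset.card) := by
  set k := (gammaPlus G u).card with hk
  -- k ≤ degree u
  have hsub : gammaPlus G u ⊆ G.neighborFinset u := Finset.filter_subset _ _
  have hk_deg : k ≤ G.degree u := by
    simpa [SimpleGraph.card_neighborFinset_eq_degree] using Finset.card_le_card hsub
  -- each x in gammaPlus has degree ≥ degree u
  have hdeg : ∀ x ∈ gammaPlus G u, G.degree u ≤ G.degree x := by
    intro x hx
    have := (Finset.mem_filter.mp hx).2
    rcases this with h | ⟨h, _⟩
    · exact le_of_lt h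
    · exact le_of_eq h
  -- k * k ≤ sum of degrees over gammaPlus
  have h1 : k * k ≤ ∑ x ∈ gammaPlus G u, G.degree x := by
    calc k * k ≤ k * G.degree u := Nat.mul_le_mul_left k hk_deg
    _ = ∑ _x ∈ gammaPlus G u, G.degree u := by rw [Finset.sum_const, smul_eq_mul]
    _ ≤ ∑ x ∈ gammaPlus G u, G.degree x := Finset.sum_le_sum hdeg
  have h2 : ∑ x ∈ gammaPlus G u, G.degree x ≤ ∑ x, G.degree x :=
    Finset.sum_le_sum_of_subset (Finset.subset_univ _)
  have h3 : k * k ≤ 2 * G.edgeFinset.card := by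
    calc k * k ≤ ∑ x, G.degree x := h1.trans h2
    _ = 2 * G.edgeFinset.card := G.sum_degrees_eq_twice_card_edges
  -- pass to reals
  have h4 : (k : ℝ) * k ≤ 2 * (G.edgeFinset.card : ℝ) := by exact_mod_cast h3
  have hm : (0:ℝ) ≤ (G.edgeFinset.card : ℝ) := by positivity
  have h5 : (k : ℝ) ≤ Real.sqrt (2 * G.edgeFinset.card) := by
    rw [show ((k:ℝ) * k) = (k:ℝ)^2 by ring] at h4
    have hx : (0:ℝ) ≤ (k:ℝ) := by positivity
    have hy : (0:ℝ) ≤ 2 * (G.edgeFinset.card : ℝ) := by positivity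
    exact (Real.le_sqrt hx hy).mpr h4
  calc (k : ℝ) ≤ Real.sqrt (2 * G.edgeFinset.card) := h5
  _ ≤ Real.sqrt (4 * G.edgeFinset.card) := Real.sqrt_le_sqrt (by linarith)
  _ = 2 * Real.sqrt (G.edgeFinset.card) := by
      rw [show (4:ℝ) * G.edgeFinset.card = 2^2 * G.edgeFinset.card by ring,
        Real.sqrt_mul (by positivity), Real.sqrt_sq (by norm_num)]
end

section
/- In a finite simple graph with m edges, for any constant k ≥ 2 the sum over all vertices u of |Γ⁺(u)|^{k−1} is at most 2^{k-2}·m^{k/2}. -/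
/-!
Every `v ∈ Γ⁺(u)` satisfies `d(v) ≥ d(u) ≥ |Γ⁺(u)|`, so `|Γ⁺(u)|² ≤ ∑_v d(v) = 2m`, whence
`|Γ⁺(u)| ≤ 2√m`. An edge lies in `Γ⁺` of its `≺`-smaller endpoint only, so `∑_u |Γ⁺(u)| ≤ m`.
Therefore `∑_u |Γ⁺(u)|^{k-1} ≤ (2√m)^{k-2} ∑_u |Γ⁺(u)| ≤ 2^{k-2} m^{k/2}`.
-/

open Finset

theorem Finset.sum_pow_succ_le_pow_mul {ι R : Type*} [CommSemiring R] [PartialOrder R]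
    [IsOrderedRing R] (s : Finset ι) (a : ι → R) {A S : R} (ha : ∀ i ∈ s, 0 ≤ a i)
    (hA : 0 ≤ A) (haA : ∀ i ∈ s, a i ≤ A) (hS : ∑ i ∈ s, a i ≤ S) (n : ℕ) :
    ∑ i ∈ s, a i ^ (n + 1) ≤ A ^ n * S :=
  calc ∑ i ∈ s, a i ^ (n + 1) = ∑ i ∈ s, a i ^ n * a i := by simp only [pow_succ]
    _ ≤ ∑ i ∈ s, A ^ n * a i := sum_le_sum fun i hi =>
        mul_le_mul_of_nonneg_right (pow_le_pow_left₀ (ha i hi) (haA i hi) n) (ha i hi)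
    _ = A ^ n * ∑ i ∈ s, a i := (mul_sum ..).symm
    _ ≤ A ^ n * S := mul_le_mul_of_nonneg_left hS (pow_nonneg hA n)

section HighNeighborhood

variable {V : Type*} [Fintype V] [LinearOrder V] (G : SimpleGraph V) [DecidableRel G.Adj]

theorem degPrec_asymm {x y : V} (hxy : degPrec G x y) : ¬ degPrec G y x := by
  rintro (hyx | ⟨hyx, hyx'⟩) <;> rcases hxy with hxy | ⟨hxy, hxy'⟩
  · omega
  · omega
  · omega
  · exact lt_asymm hxy' hyx'

theorem card_gammaPlus_le_degree_of_mem {u v : V} (hv : v ∈ gammaPlus G u) :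
    #(gammaPlus G u) ≤ G.degree v := by
  have hu : #(gammaPlus G u) ≤ G.degree u := by
    rw [← G.card_neighborFinset_eq_degree]
    exact card_le_card (filter_subset _ _)
  rcases (mem_filter.mp hv).2 with h | ⟨h, _⟩ <;> omega

theorem card_gammaPlus_sq_le (u : V) : #(gammaPlus G u) ^ 2 ≤ 2 * #G.edgeFinset :=
  calc #(gammaPlus G u) ^ 2 = ∑ _v ∈ gammaPlus G u, #(gammaPlus G u) := by
        rw [sum_const, smul_eq_mul, sq]
    _ ≤ ∑ v ∈ gammaPlus G u, G.degree v :=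
        sum_le_sum fun _ hv => card_gammaPlus_le_degree_of_mem G hv
    _ ≤ ∑ v, G.degree v := sum_le_sum_of_subset (subset_univ _)
    _ = 2 * #G.edgeFinset := G.sum_degrees_eq_twice_card_edges

theorem card_gammaPlus_le_two_mul_sqrt (u : V) :
    (#(gammaPlus G u) : ℝ) ≤ 2 * √(#G.edgeFinset : ℝ) := by
  have hsq : (#(gammaPlus G u) : ℝ) ^ 2 ≤ (2 * √(#G.edgeFinset : ℝ)) ^ 2 := by
    rw [mul_pow, Real.sq_sqrt (Nat.cast_nonneg _)]
    exact_mod_cast (card_gammaPlus_sq_le G u).trans (by omega)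
  exact (pow_le_pow_iff_left₀ (Nat.cast_nonneg _) (by positivity) two_ne_zero).mp hsq

theorem sum_card_gammaPlus_le : ∑ u, #(gammaPlus G u) ≤ #G.edgeFinset := by
  rw [← card_sigma]
  refine card_le_card_of_injOn (fun p => s(p.1, p.2)) (fun p hp => ?_) ?_
  · have hadj := (mem_filter.mp (mem_sigma.mp hp).2).1
    simpa using hadj
  · rintro ⟨u, v⟩ hp ⟨u', v'⟩ hq huv
    have hp := (mem_filter.mp (mem_sigma.mp hp).2).2
    have hq := (mem_filter.mp (mem_sigma.mp hq).2).2
    rcases Sym2.eq_iff.mp huv with ⟨rfl, rfl⟩ | ⟨rfl, rfl⟩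
    · rfl
    · exact absurd hq (degPrec_asymm G hp)

end HighNeighborhood

/-- `∑_u |Γ⁺(u)|^{k-1} ≤ 2^{k-2}·m^{k/2}` for `k ≥ 2`. -/
theorem stmt5 {V : Type*} [Fintype V] [LinearOrder V] (G : SimpleGraph V)
    [DecidableRel G.Adj] (k : ℕ) (hk : 2 ≤ k) :
    (∑ u : V, ((gammaPlus G u).card : ℝ) ^ (k - 1))
      ≤ 2 ^ (k - 2) * (G.edgeFinset.card : ℝ) ^ ((k : ℝ) / 2) := by
  obtain ⟨n, rfl⟩ : ∃ n, k = n + 2 := ⟨k - 2, by omega⟩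
  have hsum : ∑ u, (#(gammaPlus G u) : ℝ) ≤ #G.edgeFinset := by
    exact_mod_cast sum_card_gammaPlus_le G
  set m : ℝ := (#G.edgeFinset : ℝ)
  have hm : 0 ≤ m := Nat.cast_nonneg _
  calc ∑ u, (#(gammaPlus G u) : ℝ) ^ (n + 2 - 1)
      ≤ (2 * √m) ^ n * m :=
        sum_pow_succ_le_pow_mul _ _ (fun _ _ => Nat.cast_nonneg _) (by positivity)
          (fun u _ => card_gammaPlus_le_two_mul_sqrt G u) hsum n
    _ = 2 ^ n * √m ^ (n + 2) := by rw [pow_add, Real.sq_sqrt hm, mul_pow, mul_assoc]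
    _ = 2 ^ (n + 2 - 2) * m ^ (((n + 2 : ℕ) : ℝ) / 2) := by
        rw [Real.rpow_div_two_eq_sqrt _ hm, Real.rpow_natCast, Nat.add_sub_cancel]
end

section
/- In a finite simple graph with m edges, the number of k-cliques is at most 2^{k-2}·m^{k/2}/(k−1)! for every k ≥ 2 (in particular, the number of triangles is at most m^{3/2}). -/
open Finset

/-- The number of `k`-cliques of a graph with `m` edges is at most
`2^{k-2}·m^{k/2}/(k-1)!` for every `k ≥ 2`. -/
theorem stmt6 {V : Type*} [Fintype V] [DecidableEq V] (G : SimpleGraph V)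
    [DecidableRel G.Adj] (k : ℕ) (hk : 2 ≤ k) :
    ((G.cliqueFinset k).card : ℝ)
      ≤ 2 ^ (k - 2) * (G.edgeFinset.card : ℝ) ^ ((k : ℝ) / 2)
          / (Nat.factorial (k - 1)) := by
  classical
  set N := Fintype.card V with hN
  obtain ⟨e⟩ : Nonempty (V ≃ Fin N) := ⟨Fintype.equivFin V⟩
  set f : V → ℕ := fun v => G.degree v * (N + 1) + (e v : ℕ) with hf
  have helt : ∀ v : V, (e v : ℕ) < N + 1 := fun v => Nat.lt_succ_of_lt (e v).isLt
  have hfinj : Function.Injective f := by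
    intro a b hab
    have ha := helt a
    have hb := helt b
    simp only [hf] at hab
    have hdeq : G.degree a = G.degree b := by
      by_contra h
      rcases Nat.lt_or_ge (G.degree a) (G.degree b) with h' | h'
      · nlinarith [hab]
      · have h'' : G.degree b < G.degree a := lt_of_le_of_ne h' (Ne.symm h)
        nlinarith [hab]
    have : (e a : ℕ) = (e b : ℕ) := by
      rw [hdeq] at hab
      omega
    exact e.injective (Fin.ext this)
  have hdeg : ∀ u v : V, f u < f v → G.degree u ≤ G.degree v := by
    intro u v h
    by_contra h'
    push_neg at h'
    have := helt v
    simp only [hf] at h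
    nlinarith
  -- forward neighborhoods
  set Np : V → Finset V := fun u => univ.filter (fun v => G.Adj u v ∧ f u < f v) with hNp
  -- sum of forward degrees = number of edges
  have key : ∀ u : V, (Np u).card +
      ((univ.filter (fun v => G.Adj u v ∧ f v < f u)).card) = G.degree u := by
    intro u
    rw [← SimpleGraph.card_neighborFinset_eq_degree, SimpleGraph.neighborFinset_eq_filter]
    simp only [hNp, card_filter, ← Finset.sum_add_distrib]
    refine Finset.sum_congr rfl fun v _ => ?_
    by_cases hadj : G.Adj u v
    · have hne : f u ≠ f v := fun h => (G.ne_of_adj hadj) (hfinj h)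
      rcases lt_trichotomy (f u) (f v) with h | h | h
      · simp [hadj, h, not_lt.mpr (le_of_lt h)]
      · exact absurd h hne
      · simp [hadj, h, not_lt.mpr (le_of_lt h)]
    · simp [hadj]
  have hswap : ∑ u, (univ.filter (fun v => G.Adj u v ∧ f v < f u)).card
      = ∑ u, (Np u).card := by
    simp only [hNp, card_filter]
    rw [Finset.sum_comm]
    refine Finset.sum_congr rfl fun u _ => Finset.sum_congr rfl fun v _ => ?_
    exact if_congr (by rw [G.adj_comm]) rfl rfl
  have hsum2 : 2 * ∑ u, (Np u).card = 2 * G.edgeFinset.card := by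
    rw [← G.sum_degrees_eq_twice_card_edges]
    have : ∑ u, G.degree u = ∑ u, ((Np u).card +
        (univ.filter (fun v => G.Adj u v ∧ f v < f u)).card) :=
      Finset.sum_congr rfl fun u _ => (key u).symm
    rw [this, Finset.sum_add_distrib, hswap]
    ring
  have hm : ∑ u, (Np u).card = G.edgeFinset.card := by omega
  -- forward degree bound
  have hb : ∀ u : V, (Np u).card ^ 2 ≤ 2 * G.edgeFinset.card := by
    intro u
    have hsub : Np u ⊆ G.neighborFinset u := by
      intro v hv
      simp only [hNp, mem_filter] at hv
      rw [SimpleGraph.mem_neighborFinset]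
      exact hv.2.1
    have h1 : ∀ v ∈ Np u, (Np u).card ≤ G.degree v := by
      intro v hv
      have hv' := hv
      simp only [hNp, mem_filter] at hv'
      calc (Np u).card ≤ (G.neighborFinset u).card := Finset.card_le_card hsub
        _ = G.degree u := G.card_neighborFinset_eq_degree u
        _ ≤ G.degree v := hdeg u v hv'.2.2
    calc (Np u).card ^ 2 = ∑ _v ∈ Np u, (Np u).card := by
          rw [Finset.sum_const, smul_eq_mul, sq]
      _ ≤ ∑ v ∈ Np u, G.degree v := Finset.sum_le_sum h1
      _ ≤ ∑ v, G.degree v := Finset.sum_le_sum_of_subset (Finset.subset_univ _)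
      _ = 2 * G.edgeFinset.card := G.sum_degrees_eq_twice_card_edges
  -- clique counting
  have hcount : (G.cliqueFinset k).card ≤ ∑ u, (Np u).card.choose (k - 1) := by
    have hsub : G.cliqueFinset k ⊆
        univ.biUnion (fun u => ((Np u).powersetCard (k - 1)).image (insert u)) := by
      intro s hs
      rw [SimpleGraph.mem_cliqueFinset_iff] at hs
      obtain ⟨hcl, hcard⟩ := hs
      have hne : s.Nonempty := Finset.card_pos.mp (by omega)
      obtain ⟨u, hu, hmin⟩ := Finset.exists_min_image s f hne
      refine Finset.mem_biUnion.mpr ⟨u, mem_univ u,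
        Finset.mem_image.mpr ⟨s.erase u, ?_, Finset.insert_erase hu⟩⟩
      rw [Finset.mem_powersetCard]
      constructor
      · intro v hv
        rw [Finset.mem_erase] at hv
        obtain ⟨hvne, hvs⟩ := hv
        simp only [hNp, mem_filter, mem_univ, true_and]
        refine ⟨hcl hu hvs (Ne.symm hvne), ?_⟩
        exact lt_of_le_of_ne (hmin v hvs) (fun h => hvne (hfinj h).symm)
      · rw [Finset.card_erase_of_mem hu, hcard]
    calc (G.cliqueFinset k).card
        ≤ (univ.biUnion (fun u => ((Np u).powersetCard (k - 1)).image (insert u))).card :=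
          Finset.card_le_card hsub
      _ ≤ ∑ u, (((Np u).powersetCard (k - 1)).image (insert u)).card :=
          Finset.card_biUnion_le
      _ ≤ ∑ u, (Np u).card.choose (k - 1) := Finset.sum_le_sum fun u _ =>
          (Finset.card_image_le).trans (Finset.card_powersetCard _ _).le
  -- now the real arithmetic
  set M : ℝ := (G.edgeFinset.card : ℝ) with hM
  have hM0 : (0 : ℝ) ≤ M := Nat.cast_nonneg _
  set B : ℝ := 2 * Real.sqrt M with hB
  have hB0 : (0 : ℝ) ≤ B := by positivity
  have hCB : ∀ u : V, ((Np u).card : ℝ) ≤ B := by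
    intro u
    have h1 : ((Np u).card : ℝ) ^ 2 ≤ 2 * M := by
      rw [hM]; exact_mod_cast hb u
    have h2 : ((Np u).card : ℝ) ^ 2 ≤ B ^ 2 := by
      have : B ^ 2 = 4 * M := by
        rw [hB, mul_pow, Real.sq_sqrt hM0]; norm_num
      linarith
    nlinarith [Nat.cast_nonneg (α := ℝ) (Np u).card]
  -- key inequality times (k-1)!
  have hfac0 : (0 : ℝ) < (Nat.factorial (k - 1) : ℝ) := by
    exact_mod_cast Nat.factorial_pos (k - 1)
  rw [le_div_iff₀ hfac0]
  have hkk : k - 1 = (k - 2) + 1 := by omega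
  calc ((G.cliqueFinset k).card : ℝ) * (Nat.factorial (k - 1) : ℝ)
      ≤ (∑ u, ((Np u).card.choose (k - 1) : ℝ)) * (Nat.factorial (k - 1) : ℝ) := by
        apply mul_le_mul_of_nonneg_right _ hfac0.le
        exact_mod_cast hcount
    _ = ∑ u, (((Np u).card.choose (k - 1) : ℝ) * (Nat.factorial (k - 1) : ℝ)) := by
        rw [Finset.sum_mul]
    _ ≤ ∑ u, ((Np u).card : ℝ) ^ (k - 1) := by
        refine Finset.sum_le_sum fun u _ => ?_
        have h1 : (Np u).card.choose (k - 1) * Nat.factorial (k - 1)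
            ≤ (Np u).card ^ (k - 1) := by
          rw [mul_comm, ← Nat.descFactorial_eq_factorial_mul_choose]
          exact Nat.descFactorial_le_pow _ _
        exact_mod_cast h1
    _ ≤ ∑ u, ((Np u).card : ℝ) * B ^ (k - 2) := by
        refine Finset.sum_le_sum fun u _ => ?_
        rw [hkk, pow_succ, mul_comm]
        apply mul_le_mul_of_nonneg_left _ (Nat.cast_nonneg _)
        exact pow_le_pow_left₀ (Nat.cast_nonneg _) (hCB u) _
    _ = (∑ u, ((Np u).card : ℝ)) * B ^ (k - 2) := by rw [Finset.sum_mul]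
    _ = M * B ^ (k - 2) := by
        congr 1
        rw [hM, ← hm]
        push_cast
        rfl
    _ ≤ 2 ^ (k - 2) * M ^ ((k : ℝ) / 2) := by
        rw [hB, mul_pow]
        have hsq : Real.sqrt M ^ 2 = M := Real.sq_sqrt hM0
        have hpow : M * Real.sqrt M ^ (k - 2) = Real.sqrt M ^ k := by
          have hk2 : Real.sqrt M ^ k = Real.sqrt M ^ (2 + (k - 2)) := by
            congr 1
            omega
          rw [hk2, pow_add, hsq]
        have hrpow : Real.sqrt M ^ k = M ^ ((k : ℝ) / 2) := by
          rw [Real.sqrt_eq_rpow, ← Real.rpow_natCast (M ^ ((1:ℝ)/2)) k,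
            ← Real.rpow_mul hM0]
          congr 1
          ring
        refine le_of_eq ?_
        calc M * (2 ^ (k - 2) * Real.sqrt M ^ (k - 2))
            = 2 ^ (k - 2) * (M * Real.sqrt M ^ (k - 2)) := by ring
          _ = 2 ^ (k - 2) * M ^ ((k : ℝ) / 2) := by rw [hpow, hrpow]
end
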